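/- arXiv:math/0001184 — 3 statements merged into one kernel-verified Lean document; each statement's English description precedes it below -/
import Mathlib

section
/- Let g be a simple complex Lie algebra, α, β ∈ Δ with α ≠ ±β, S = S(α,β) the α-string through β. Then Σ_{j∈S} [e_{-α}, e_{β+jα} e_{-β-jα}] = 0 in U(g). -/
/-!
Write `γ_j = β + jα`. By the Leibniz rule in `U(g)` the `j`-th summand is
`[e_{-α}, e_{γ_j}] e_{-γ_j} + e_{γ_j} [e_{-α}, e_{-γ_j}]`, and both brackets are root vectors
of the neighbouring string positions. Invariance of the form gives
`N_{-α,-γ_j} = -N_{-α,γ_{j+1}}`, so the summand is `G_j - G_{j+1}` with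
`G_j = N_{-α,γ_j} e_{γ_{j-1}} e_{-γ_j}`, and the sum telescopes. Because the string is unbroken
and `±α` are roots, it can pass through `0` only if `0 ∈ Δ`, so no bracket leaves the root
vectors for a Cartan element.
-/

attribute [local instance 100] LieRing.ofAssociativeRing

open UniversalEnvelopingAlgebra

theorem Ring.lie_mul {A : Type*} [Ring A] (x a b : A) :
    ⁅x, a * b⁆ = ⁅x, a⁆ * b + a * ⁅x, b⁆ := by
  simp only [Ring.lie_def]
  noncomm_ring

theorem Finset.sum_sub_shift_eq_zero {M : Type*} [AddCommGroup M] (S : Finset ℤ) (G : ℤ → M)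
    (hG : ∀ j, G j ≠ 0 → j ∈ S ∧ j - 1 ∈ S) : ∑ j ∈ S, (G j - G (j + 1)) = 0 := by
  have hsum : ∑ j ∈ S, G j = ∑ᶠ j, G j :=
    (finsum_eq_sum_of_support_subset G fun j hj => (hG j hj).1).symm
  have hsum_shift : ∑ j ∈ S, G (j + 1) = ∑ᶠ j, G (j + 1) :=
    (finsum_eq_sum_of_support_subset _ fun j hj => by simpa using (hG _ hj).2).symm
  rw [Finset.sum_sub_distrib, hsum, hsum_shift, sub_eq_zero]
  exact (finsum_comp_equiv (Equiv.addRight 1)).symm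

theorem eq_neg_of_lie_eq_smul_of_invariant {K L : Type*} [CommRing K] [LieRing L] [Module K L]
    (B : L →ₗ[K] L →ₗ[K] K) (hB : ∀ x y z : L, B ⁅x, y⁆ z = B x ⁅y, z⁆)
    {x y z u w : L} {a b : K} (hy : ⁅x, y⁆ = a • u) (hz : ⁅x, z⁆ = b • w)
    (hu : B u z = 1) (hw : B w y = 1) : b = -a := by
  calc b = B ⁅x, z⁆ y := by simp [hz, hw]
    _ = -B ⁅x, y⁆ z := by rw [hB, hB, ← lie_skew, map_neg]
    _ = -a := by simp [hy, hu]

def HasStructureConstants {R K L : Type*} [AddCommGroup R] [CommRing K] [LieRing L] [Module K L]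
    (Δ : Finset R) (e : R → L) (N : R → R → K) : Prop :=
  (∀ γ ∈ Δ, ∀ δ ∈ Δ, γ + δ ∈ Δ → ⁅e γ, e δ⁆ = N γ δ • e (γ + δ)) ∧
    ∀ γ ∈ Δ, ∀ δ ∈ Δ, γ + δ ≠ 0 → γ + δ ∉ Δ → ⁅e γ, e δ⁆ = 0

section RootString

variable {R : Type*} [AddCommGroup R] {Δ : Finset R} {S : Finset ℤ} {α β : R}

theorem mem_of_add_zsmul_eq_zero (hS : ∀ j : ℤ, j ∈ S ↔ β + j • α ∈ Δ)
    (hconn : (S : Set ℤ).OrdConnected) (hα : α ∈ Δ) (hnegα : -α ∈ Δ) {i : ℤ}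
    (hi : β + i • α = 0) : i ∈ S := by
  have hpred : i - 1 ∈ S := (hS _).2 <| by
    rwa [show β + (i - 1) • α = β + i • α - α by rw [sub_zsmul, one_zsmul]; abel, hi, zero_sub]
  have hsucc : i + 1 ∈ S := (hS _).2 <| by
    rwa [add_zsmul, one_zsmul, ← add_assoc, hi, zero_add]
  exact hconn.out hpred hsucc ⟨by omega, by omega⟩

variable {K L : Type*} [CommRing K] [LieRing L] [Module K L] {e : R → L} {N : R → R → K}

theorem HasStructureConstants.lie_eq_ite [DecidableEq R] (hN : HasStructureConstants Δ e N)
    {γ δ : R} (hγ : γ ∈ Δ) (hδ : δ ∈ Δ) (h0 : γ + δ = 0 → γ + δ ∈ Δ) :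
    ⁅e γ, e δ⁆ = if γ + δ ∈ Δ then N γ δ • e (γ + δ) else 0 := by
  split_ifs with hmem
  · exact hN.1 γ hγ δ hδ hmem
  · exact hN.2 γ hγ δ hδ (fun h => hmem (h0 h)) hmem

theorem lie_neg_root_string_eq_ite [DecidableEq R]
    (hN : HasStructureConstants Δ e N)
    (hnegmem : ∀ γ ∈ Δ, -γ ∈ Δ) (hS : ∀ j : ℤ, j ∈ S ↔ β + j • α ∈ Δ)
    (hconn : (S : Set ℤ).OrdConnected) (hα : α ∈ Δ) {j : ℤ} (hj : j ∈ S) :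
    ⁅e (-α), e (β + j • α)⁆ =
      if j - 1 ∈ S then N (-α) (β + j • α) • e (β + (j - 1) • α) else 0 := by
  have hsum : -α + (β + j • α) = β + (j - 1) • α := by rw [sub_zsmul, one_zsmul]; abel
  have hmem : β + (j - 1) • α ∈ Δ ↔ j - 1 ∈ S := (hS _).symm
  rw [hN.lie_eq_ite (hnegmem α hα) ((hS j).1 hj), hsum]
  · simp only [hmem]
  · rw [hsum, hmem]
    exact mem_of_add_zsmul_eq_zero hS hconn hα (hnegmem α hα)

theorem lie_neg_root_neg_string_eq_ite [DecidableEq R]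
    (hN : HasStructureConstants Δ e N)
    (hnegmem : ∀ γ ∈ Δ, -γ ∈ Δ) (hS : ∀ j : ℤ, j ∈ S ↔ β + j • α ∈ Δ)
    (hconn : (S : Set ℤ).OrdConnected) (hα : α ∈ Δ) {j : ℤ} (hj : j ∈ S) :
    ⁅e (-α), e (-(β + j • α))⁆ =
      if j + 1 ∈ S then N (-α) (-(β + j • α)) • e (-(β + (j + 1) • α)) else 0 := by
  have hsum : -α + -(β + j • α) = -(β + (j + 1) • α) := by rw [add_zsmul, one_zsmul]; abel
  have hmem : -(β + (j + 1) • α) ∈ Δ ↔ j + 1 ∈ S :=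
    ⟨fun h => (hS _).2 (by simpa using hnegmem _ h), fun h => hnegmem _ ((hS _).1 h)⟩
  rw [hN.lie_eq_ite (hnegmem α hα) (hnegmem _ ((hS j).1 hj)), hsum]
  · simp only [hmem]
  · rw [hsum, hmem, neg_eq_zero]
    exact mem_of_add_zsmul_eq_zero hS hconn hα (hnegmem α hα)

theorem root_string_coeff_neg [DecidableEq R] (B : L →ₗ[K] L →ₗ[K] K)
    (hBinv : ∀ x y z : L, B ⁅x, y⁆ z = B x ⁅y, z⁆)
    (hnorm : ∀ γ ∈ Δ, B (e γ) (e (-γ)) = 1)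
    (hN : HasStructureConstants Δ e N)
    (hnegmem : ∀ γ ∈ Δ, -γ ∈ Δ) (hS : ∀ j : ℤ, j ∈ S ↔ β + j • α ∈ Δ)
    (hconn : (S : Set ℤ).OrdConnected) (hα : α ∈ Δ) {j : ℤ} (hj : j ∈ S) (hj1 : j + 1 ∈ S) :
    N (-α) (-(β + j • α)) = -N (-α) (β + (j + 1) • α) :=
  eq_neg_of_lie_eq_smul_of_invariant B hBinv
    (by simpa [hj] using lie_neg_root_string_eq_ite hN hnegmem hS hconn hα hj1)
    (by simpa [hj1] using lie_neg_root_neg_string_eq_ite hN hnegmem hS hconn hα hj)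
    (hnorm _ ((hS j).1 hj)) (by simpa using hnorm _ (hnegmem _ ((hS _).1 hj1)))

end RootString

section EnvelopingAlgebra

variable {R : Type*} [AddCommGroup R] {K L : Type*} [CommRing K] [LieRing L] [LieAlgebra K L]

noncomputable def rootStringTelescope (S : Finset ℤ) (e : R → L) (N : R → R → K) (α β : R)
    (j : ℤ) : UniversalEnvelopingAlgebra K L :=
  if j ∈ S ∧ j - 1 ∈ S then
    N (-α) (β + j • α) • (ι K (e (β + (j - 1) • α)) * ι K (e (-(β + j • α))))
  else 0

theorem lie_root_string_summand_eq_sub [DecidableEq R] {Δ : Finset R} {S : Finset ℤ}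
    {α β : R} {e : R → L} {N : R → R → K} (B : L →ₗ[K] L →ₗ[K] K)
    (hBinv : ∀ x y z : L, B ⁅x, y⁆ z = B x ⁅y, z⁆)
    (hnorm : ∀ γ ∈ Δ, B (e γ) (e (-γ)) = 1)
    (hN : HasStructureConstants Δ e N)
    (hnegmem : ∀ γ ∈ Δ, -γ ∈ Δ) (hS : ∀ j : ℤ, j ∈ S ↔ β + j • α ∈ Δ)
    (hconn : (S : Set ℤ).OrdConnected) (hα : α ∈ Δ) {j : ℤ} (hj : j ∈ S) :
    ⁅ι K (e (-α)), ι K (e (β + j • α)) * ι K (e (-(β + j • α)))⁆ =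
      rootStringTelescope S e N α β j - rootStringTelescope S e N α β (j + 1) := by
  have hfirst : ι K ⁅e (-α), e (β + j • α)⁆ * ι K (e (-(β + j • α))) =
      rootStringTelescope S e N α β j := by
    rw [lie_neg_root_string_eq_ite hN hnegmem hS hconn hα hj, rootStringTelescope]
    by_cases hpred : j - 1 ∈ S
    · simp only [hj, hpred, and_self, ↓reduceIte, map_smul, smul_mul_assoc]
    · simp only [hpred, and_false, ↓reduceIte, map_zero, zero_mul]
  have hsecond : ι K (e (β + j • α)) * ι K ⁅e (-α), e (-(β + j • α))⁆ =
      -rootStringTelescope S e N α β (j + 1) := by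
    rw [lie_neg_root_neg_string_eq_ite hN hnegmem hS hconn hα hj, rootStringTelescope,
      add_sub_cancel_right]
    by_cases hsucc : j + 1 ∈ S
    · simp only [hj, hsucc, and_self, ↓reduceIte, neg_smul, map_neg, map_smul, mul_neg,
        mul_smul_comm, root_string_coeff_neg B hBinv hnorm hN hnegmem hS hconn hα hj hsucc]
    · simp only [hsucc, false_and, ↓reduceIte, map_zero, mul_zero, neg_zero]
  rw [Ring.lie_mul, ← LieHom.map_lie, ← LieHom.map_lie, hfirst, hsecond, sub_eq_add_neg]

end EnvelopingAlgebra

theorem root_string_sum_bracket_eminus_general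
    {R : Type*} [AddCommGroup R] {L : Type*} [LieRing L] [LieAlgebra ℂ L]
    (Δ : Finset R) (e : R → L) (B : L →ₗ[ℂ] L →ₗ[ℂ] ℂ)
    (hBinv : ∀ x y z : L, B ⁅x, y⁆ z = B x ⁅y, z⁆)
    (hnegmem : ∀ γ ∈ Δ, -γ ∈ Δ)
    (hnorm : ∀ γ ∈ Δ, B (e γ) (e (-γ)) = 1)
    (N : R → R → ℂ)
    (hbr : ∀ γ ∈ Δ, ∀ δ ∈ Δ, γ + δ ∈ Δ → ⁅e γ, e δ⁆ = N γ δ • e (γ + δ))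
    (hvanish : ∀ γ ∈ Δ, ∀ δ ∈ Δ, γ + δ ≠ 0 → γ + δ ∉ Δ → ⁅e γ, e δ⁆ = 0)
    {α β : R} (hα : α ∈ Δ)
    (S : Finset ℤ) (hS : ∀ j : ℤ, j ∈ S ↔ β + j • α ∈ Δ)
    (hstring : ∃ p q : ℤ, (S : Set ℤ) = Set.Icc p q) :
    ∑ j ∈ S,
      ⁅(UniversalEnvelopingAlgebra.ι ℂ : L →ₗ⁅ℂ⁆ _) (e (-α)),
        (UniversalEnvelopingAlgebra.ι ℂ : L →ₗ⁅ℂ⁆ _) (e (β + j • α)) *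
          (UniversalEnvelopingAlgebra.ι ℂ : L →ₗ⁅ℂ⁆ _) (e (-(β + j • α)))⁆
      = (0 : UniversalEnvelopingAlgebra ℂ L) := by
  classical
  obtain ⟨p, q, hpq⟩ := hstring
  have hconn : (S : Set ℤ).OrdConnected := hpq ▸ Set.ordConnected_Icc
  have hN : HasStructureConstants Δ e N := ⟨hbr, hvanish⟩
  rw [Finset.sum_congr rfl fun j hj =>
    lie_root_string_summand_eq_sub B hBinv hnorm hN hnegmem hS hconn hα hj]
  exact Finset.sum_sub_shift_eq_zero S _ fun j hj => not_not.1 fun hout => hj (if_neg hout)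

theorem root_string_sum_bracket_eminus
    {R : Type*} [AddCommGroup R] {L : Type*} [LieRing L] [LieAlgebra ℂ L]
    (Δ : Finset R) (e : R → L) (B : L →ₗ[ℂ] L →ₗ[ℂ] ℂ)
    (hBsymm : ∀ x y : L, B x y = B y x)
    (hBinv : ∀ x y z : L, B ⁅x, y⁆ z = B x ⁅y, z⁆)
    (hnegmem : ∀ γ ∈ Δ, -γ ∈ Δ)
    (hnorm : ∀ γ ∈ Δ, B (e γ) (e (-γ)) = 1)
    (N : R → R → ℂ)
    (hbr : ∀ γ ∈ Δ, ∀ δ ∈ Δ, γ + δ ∈ Δ → ⁅e γ, e δ⁆ = N γ δ • e (γ + δ))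
    (hvanish : ∀ γ ∈ Δ, ∀ δ ∈ Δ, γ + δ ≠ 0 → γ + δ ∉ Δ → ⁅e γ, e δ⁆ = 0)
    {α β : R} (hα : α ∈ Δ) (hβ : β ∈ Δ) (h1 : β ≠ α) (h2 : β ≠ -α)
    (S : Finset ℤ) (hS : ∀ j : ℤ, j ∈ S ↔ β + j • α ∈ Δ)
    (hstring : ∃ p q : ℤ, (S : Set ℤ) = Set.Icc p q) :
    ∑ j ∈ S,
      ⁅(UniversalEnvelopingAlgebra.ι ℂ : L →ₗ⁅ℂ⁆ _) (e (-α)),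
        (UniversalEnvelopingAlgebra.ι ℂ : L →ₗ⁅ℂ⁆ _) (e (β + j • α)) *
          (UniversalEnvelopingAlgebra.ι ℂ : L →ₗ⁅ℂ⁆ _) (e (-(β + j • α)))⁆
      = (0 : UniversalEnvelopingAlgebra ℂ L) :=
  root_string_sum_bracket_eminus_general Δ e B hBinv hnegmem hnorm N hbr hvanish hα S hS hstring
end

section
/- Let g be a simple complex Lie algebra and V a finite-dimensional g-module (or tensor product of highest weight modules). The operators A_{μ'} = Σ_{α>0} (⟨α,μ'⟩/⟨α,μ⟩) e_{-α}e_α on V, for μ' ∈ h and fixed regular μ ∈ h, pairwise commute: [A_{μ'}, A_{μ''}] = 0 for all μ', μ'' ∈ h. -/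
/-!
Over all roots, `S_f = ∑_{α ∈ Δ} f α • e_{-α} e_α` is twice the sum over positive roots plus a
Cartan element, and Cartan elements commute with every `e_{-β} e_β`; so it suffices that `S_f` and
`S_g` commute, for `f = ⟨·, μ'⟩ / ⟨·, μ⟩` and `g = ⟨·, μ''⟩ / ⟨·, μ⟩`.

Expanding the commutator and using the symmetry `α ↦ -α` gives
`2 [S_f, S_g] = ∑_{α, β} (f α g β - g α f β) {e_α, {e_β, [e_{-α}, e_{-β}]}}`, and only the pairs
with `-(α + β)` a root survive. So the sum runs over root triples `p + q + r = 0`. Invariance of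
the form makes the structure constants cyclic on such triples, and `f p g q - g p f q` is a
cocycle on them; hence the three rotations of a triple add up to a Cartan element, and these
cancel in pairs under `(p, q) ↦ (-p, -q)`.
-/

open Finset

attribute [local instance 100] LieRing.ofAssociativeRing

section NegClosed

variable {M A : Type*} [AddCommGroup M] [AddCommGroup A] {Δ : Finset M}

theorem Finset.sum_comp_neg_of_neg_mem (hΔ : ∀ α ∈ Δ, -α ∈ Δ) (F : M → A) :
    ∑ α ∈ Δ, F (-α) = ∑ α ∈ Δ, F α :=
  sum_nbij' Neg.neg Neg.neg hΔ hΔ (fun α _ ↦ neg_neg α) (fun α _ ↦ neg_neg α) fun _ _ ↦ rfl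

theorem Finset.sum_eq_zero_of_odd [IsAddTorsionFree A] (hΔ : ∀ α ∈ Δ, -α ∈ Δ)
    {F : M → A} (hF : ∀ α ∈ Δ, F (-α) = -F α) : ∑ α ∈ Δ, F α = 0 := by
  rw [← self_eq_neg]
  calc ∑ α ∈ Δ, F α = ∑ α ∈ Δ, F (-α) := (sum_comp_neg_of_neg_mem hΔ F).symm
    _ = ∑ α ∈ Δ, -F α := sum_congr rfl hF
    _ = -∑ α ∈ Δ, F α := sum_neg_distrib F

theorem Finset.sum_eq_sum_add_comp_neg {P : Finset M} (hPΔ : P ⊆ Δ)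
    (hΔ : ∀ α ∈ Δ, -α ∈ Δ) (hsplit : ∀ α ∈ Δ, α ∈ P ∨ -α ∈ P) (hdisj : ∀ α ∈ P, -α ∉ P)
    (F : M → A) : ∑ α ∈ Δ, F α = ∑ α ∈ P, (F α + F (-α)) := by
  classical
  have hneg : ∑ α ∈ P, F (-α) = ∑ α ∈ Δ \ P, F α :=
    sum_nbij' Neg.neg Neg.neg
      (fun α hα ↦ mem_sdiff.2 ⟨hΔ α (hPΔ hα), hdisj α hα⟩)
      (fun α hα ↦ (hsplit α (mem_sdiff.1 hα).1).resolve_left (mem_sdiff.1 hα).2)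
      (fun α _ ↦ neg_neg α) (fun α _ ↦ neg_neg α) fun _ _ ↦ rfl
  rw [sum_add_distrib, hneg, add_comm, sum_sdiff hPΔ]

end NegClosed

section ZeroSumPairs

variable {M A : Type*} [AddCommGroup M] [AddCommGroup A] [DecidableEq M] {Δ : Finset M}

def Finset.zeroSumPairs (Δ : Finset M) : Finset (M × M) :=
  (Δ ×ˢ Δ).filter fun x ↦ -(x.1 + x.2) ∈ Δ

theorem Finset.mem_zeroSumPairs {x : M × M} :
    x ∈ Δ.zeroSumPairs ↔ x.1 ∈ Δ ∧ x.2 ∈ Δ ∧ -(x.1 + x.2) ∈ Δ := by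
  simp [zeroSumPairs, and_assoc]

theorem Finset.neg_mem_zeroSumPairs (hΔ : ∀ α ∈ Δ, -α ∈ Δ) {x : M × M}
    (hx : x ∈ Δ.zeroSumPairs) : -x ∈ Δ.zeroSumPairs := by
  obtain ⟨h₁, h₂, h₃⟩ := mem_zeroSumPairs.1 hx
  refine mem_zeroSumPairs.2 ⟨hΔ _ h₁, hΔ _ h₂, ?_⟩
  convert hΔ _ h₃ using 1
  simp [add_comm]

theorem Finset.sum_zeroSumPairs_rotate (F : M → M → A) :
    ∑ x ∈ Δ.zeroSumPairs, F x.2 (-(x.1 + x.2)) = ∑ x ∈ Δ.zeroSumPairs, F x.1 x.2 := by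
  refine sum_nbij' (fun x ↦ (x.2, -(x.1 + x.2))) (fun x ↦ (-(x.1 + x.2), x.1)) ?_ ?_ ?_ ?_
    fun _ _ ↦ rfl
  all_goals intro x hx
  · obtain ⟨h₁, h₂, h₃⟩ := mem_zeroSumPairs.1 hx
    exact mem_zeroSumPairs.2 ⟨h₂, h₃, by rwa [neg_add_rev, neg_neg, add_neg_cancel_right]⟩
  · obtain ⟨h₁, h₂, h₃⟩ := mem_zeroSumPairs.1 hx
    exact mem_zeroSumPairs.2 ⟨h₃, h₁, by rwa [neg_add_rev, neg_neg, neg_add_cancel_left]⟩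
  · simp
  · simp

theorem Finset.three_nsmul_sum_zeroSumPairs (F : M → M → A) :
    3 • ∑ x ∈ Δ.zeroSumPairs, F x.1 x.2 = ∑ x ∈ Δ.zeroSumPairs,
      (F x.1 x.2 + F x.2 (-(x.1 + x.2)) + F (-(x.1 + x.2)) x.1) := by
  rw [sum_add_distrib, sum_add_distrib, sum_zeroSumPairs_rotate F,
    ← sum_zeroSumPairs_rotate fun p q ↦ F (-(p + q)) p]
  have e : ∀ x : M × M, -(x.2 + -(x.1 + x.2)) = x.1 := fun x ↦ by abel
  simp only [e]
  abel

end ZeroSumPairs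

section Anticommutator

variable {K R : Type*} [CommRing K] [Ring R] [Algebra K R]

def anticomm (x y : R) : R := x * y + y * x

theorem lie_mul_mul (a b c d : R) :
    ⁅a * b, c * d⁆ = a * ⁅b, c⁆ * d + a * c * ⁅b, d⁆ + ⁅a, c⁆ * d * b + c * ⁅a, d⁆ * b := by
  simp only [Ring.lie_def]
  noncomm_ring

theorem anticomm_anticomm_sub_anticomm_anticomm (x y z : R) :
    anticomm x (anticomm y z) - anticomm y (anticomm z x) = ⁅⁅x, y⁆, z⁆ := by
  simp only [anticomm, Ring.lie_def]
  noncomm_ring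

theorem smul_anticomm_anticomm_cyclic {a b c : K} (habc : a + b + c = 0) (x y z : R) :
    a • anticomm x (anticomm y z) + b • anticomm y (anticomm z x) + c • anticomm z (anticomm x y)
      = a • ⁅⁅x, y⁆, z⁆ - c • ⁅⁅y, z⁆, x⁆ := by
  rw [← anticomm_anticomm_sub_anticomm_anticomm, ← anticomm_anticomm_sub_anticomm_anticomm,
    show b = -a - c by linear_combination habc]
  module

theorem anticomm_smul_right (c : K) (x y : R) : anticomm x (c • y) = c • anticomm x y := by
  simp only [anticomm, mul_smul_comm, smul_mul_assoc, smul_add]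

theorem commute_mul_of_lie_eq_smul {h u v : R} {c : K} (hu : ⁅h, u⁆ = (-c) • u)
    (hv : ⁅h, v⁆ = c • v) : Commute h (u * v) := by
  rw [commute_iff_lie_eq, show ⁅h, u * v⁆ = ⁅h, u⁆ * v + u * ⁅h, v⁆ by
    simp only [Ring.lie_def]; noncomm_ring, hu, hv, smul_mul_assoc, mul_smul_comm, neg_smul,
    neg_add_cancel]

end Anticommutator

section WeightedCasimir

variable {K R M : Type*} [CommRing K] [Ring R] [Algebra K R] [AddCommGroup M]
  (Δ : Finset M) (X : M → R)

def wedge (f g : M → K) (p q : M) : K := f p * g q - g p * f q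

theorem wedge_neg_neg {f g : M → K} (hf : ∀ α, f (-α) = f α) (hg : ∀ α, g (-α) = g α)
    (p q : M) : wedge f g (-p) (-q) = wedge f g p q := by
  simp only [wedge, hf, hg]

theorem wedge_neg_right {f g : M → K} (hf : ∀ α, f (-α) = f α) (hg : ∀ α, g (-α) = g α)
    (p : M) : wedge f g p (-p) = 0 := by
  simp only [wedge, hf, hg]
  ring

def weightedCasimir (f : M → K) : R := ∑ α ∈ Δ, f α • (X (-α) * X α)

variable {Δ} {f g : M → K}

theorem lie_weightedCasimir (hΔ : ∀ α ∈ Δ, -α ∈ Δ) (hf : ∀ α, f (-α) = f α)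
    (hg : ∀ α, g (-α) = g α) :
    ⁅weightedCasimir Δ X f, weightedCasimir Δ X g⁆ = ∑ α ∈ Δ, ∑ β ∈ Δ,
      (f α * g β) • anticomm (X α) (anticomm (X β) ⁅X (-α), X (-β)⁆) := by
  have hneg := sum_comp_neg_of_neg_mem (A := R) hΔ
  calc ⁅weightedCasimir Δ X f, weightedCasimir Δ X g⁆
      = ∑ α ∈ Δ, ∑ β ∈ Δ, (f α * g β) • ⁅X (-α) * X α, X (-β) * X β⁆ := by
        simp only [weightedCasimir, sum_lie_sum, smul_lie]
        refine sum_congr rfl fun α _ ↦ sum_congr rfl fun β _ ↦ ?_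
        rw [← smul_smul]
        exact congrArg _ (lie_smul (g β) (X (-α) * X α) (X (-β) * X β))
    _ = ∑ α ∈ Δ, ∑ β ∈ Δ, (f α * g β) • (X α * ⁅X (-α), X (-β)⁆ * X β)
        + ∑ α ∈ Δ, ∑ β ∈ Δ, (f α * g β) • (X α * X β * ⁅X (-α), X (-β)⁆)
        + ∑ α ∈ Δ, ∑ β ∈ Δ, (f α * g β) • (⁅X (-α), X (-β)⁆ * X β * X α)
        + ∑ α ∈ Δ, ∑ β ∈ Δ, (f α * g β) • (X β * ⁅X (-α), X (-β)⁆ * X α) := by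
        simp only [lie_mul_mul, smul_add, sum_add_distrib]
        congr 3
        · rw [← hneg]
          simp only [neg_neg, hf]
        · rw [← hneg]
          refine sum_congr rfl fun α _ ↦ ?_
          rw [← hneg]
          simp only [neg_neg, hf, hg]
        · funext α
          rw [← hneg]
          simp only [neg_neg, hg]
    _ = _ := by
        simp only [← sum_add_distrib, ← smul_add]
        refine sum_congr rfl fun α _ ↦ sum_congr rfl fun β _ ↦ ?_
        congr 1
        simp only [anticomm]
        noncomm_ring

theorem two_nsmul_lie_weightedCasimir (hΔ : ∀ α ∈ Δ, -α ∈ Δ) (hf : ∀ α, f (-α) = f α)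
    (hg : ∀ α, g (-α) = g α) :
    2 • ⁅weightedCasimir Δ X f, weightedCasimir Δ X g⁆ = ∑ α ∈ Δ, ∑ β ∈ Δ,
      wedge f g α β • anticomm (X α) (anticomm (X β) ⁅X (-α), X (-β)⁆) := by
  rw [two_nsmul]
  nth_rw 2 [← lie_skew]
  rw [← sub_eq_add_neg, lie_weightedCasimir X hΔ hf hg, lie_weightedCasimir X hΔ hg hf,
    ← sum_sub_distrib]
  refine sum_congr rfl fun α _ ↦ ?_
  rw [← sum_sub_distrib]
  refine sum_congr rfl fun β _ ↦ ?_
  rw [← sub_smul, wedge, mul_comm (g α)]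

theorem sum_sum_smul_anticomm_eq_sum_zeroSumPairs [DecidableEq M] (hΔ : ∀ α ∈ Δ, -α ∈ Δ)
    {N : M → M → K}
    (hbr : ∀ α ∈ Δ, ∀ β ∈ Δ, α + β ∈ Δ → ⁅X α, X β⁆ = N α β • X (α + β))
    (hvanish : ∀ α ∈ Δ, ∀ β ∈ Δ, α + β ≠ 0 → α + β ∉ Δ → ⁅X α, X β⁆ = 0)
    {w : M → M → K} (hw : ∀ α ∈ Δ, w α (-α) = 0) :
    ∑ α ∈ Δ, ∑ β ∈ Δ, w α β • anticomm (X α) (anticomm (X β) ⁅X (-α), X (-β)⁆)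
      = ∑ x ∈ Δ.zeroSumPairs, (w x.1 x.2 * N (-x.1) (-x.2)) •
          anticomm (X x.1) (anticomm (X x.2) (X (-(x.1 + x.2)))) := by
  rw [← sum_product', zeroSumPairs, ← sum_filter_of_ne (p := fun x ↦ -(x.1 + x.2) ∈ Δ)]
  · refine sum_congr rfl fun x hx ↦ ?_
    obtain ⟨h₁, h₂, h₃⟩ := mem_zeroSumPairs.1 hx
    rw [neg_add] at h₃ ⊢
    rw [hbr _ (hΔ _ h₁) _ (hΔ _ h₂) h₃, anticomm_smul_right, anticomm_smul_right, smul_smul]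
  · rintro x hx hne
    obtain ⟨h₁, h₂⟩ := mem_product.1 hx
    by_contra h₃
    rcases eq_or_ne (x.1 + x.2) 0 with h₀ | h₀
    · rw [eq_neg_of_add_eq_zero_right h₀, hw _ h₁, zero_smul] at hne
      exact hne rfl
    · rw [neg_add] at h₃
      rw [hvanish _ (hΔ _ h₁) _ (hΔ _ h₂) (by rwa [← neg_add, neg_ne_zero]) h₃] at hne
      simp [anticomm] at hne

theorem cyclic_anticomm_sum_of_add_add_eq_zero {N : M → M → K}
    (hbr : ∀ α ∈ Δ, ∀ β ∈ Δ, α + β ∈ Δ → ⁅X α, X β⁆ = N α β • X (α + β))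
    (hcyc : ∀ p ∈ Δ, ∀ q ∈ Δ, ∀ r ∈ Δ, p + q + r = 0 → N p q = N q r)
    (hfg : ∀ p ∈ Δ, ∀ q ∈ Δ, ∀ r ∈ Δ, p + q + r = 0 →
      wedge f g p q + wedge f g q r + wedge f g r p = 0)
    (hΔ : ∀ α ∈ Δ, -α ∈ Δ) {p q r : M} (hp : p ∈ Δ) (hq : q ∈ Δ) (hr : r ∈ Δ)
    (hpqr : p + q + r = 0) :
    (wedge f g p q * N (-p) (-q)) • anticomm (X p) (anticomm (X q) (X r))
      + (wedge f g q r * N (-q) (-r)) • anticomm (X q) (anticomm (X r) (X p))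
      + (wedge f g r p * N (-r) (-p)) • anticomm (X r) (anticomm (X p) (X q))
      = (N p q * N (-p) (-q)) •
          (wedge f g p q • ⁅X (-r), X r⁆ - wedge f g r p • ⁅X (-p), X p⁆) := by
  have hnp := hΔ p hp
  have hnq := hΔ q hq
  have hnr := hΔ r hr
  have hqrp : q + r + p = 0 := by rw [← hpqr]; abel
  have hneg : -p + -q + -r = 0 := by rw [← neg_add, ← neg_add, hpqr, neg_zero]
  have hneg' : -q + -r + -p = 0 := by rw [← hneg]; abel
  have hpq : p + q = -r := eq_neg_of_add_eq_zero_left hpqr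
  have hqr : q + r = -p := eq_neg_of_add_eq_zero_left hqrp
  rw [← hcyc _ hnq _ hnr _ hnp hneg', ← hcyc _ hnp _ hnq _ hnr hneg, mul_comm (wedge f g p q),
    mul_comm (wedge f g q r), mul_comm (wedge f g r p), mul_smul, mul_smul, mul_smul,
    ← smul_add, ← smul_add, smul_anticomm_anticomm_cyclic (hfg p hp q hq r hr hpqr),
    hbr p hp q hq (hpq ▸ hnr), hbr q hq r hr (hqr ▸ hnp), hpq, hqr,
    ← hcyc p hp q hq r hr hpqr, smul_lie, smul_lie, mul_comm, mul_smul]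
  module

theorem commute_weightedCasimir [IsAddTorsionFree R] {N : M → M → K} (hΔ : ∀ α ∈ Δ, -α ∈ Δ)
    (hbr : ∀ α ∈ Δ, ∀ β ∈ Δ, α + β ∈ Δ → ⁅X α, X β⁆ = N α β • X (α + β))
    (hvanish : ∀ α ∈ Δ, ∀ β ∈ Δ, α + β ≠ 0 → α + β ∉ Δ → ⁅X α, X β⁆ = 0)
    (hcyc : ∀ p ∈ Δ, ∀ q ∈ Δ, ∀ r ∈ Δ, p + q + r = 0 → N p q = N q r)
    (hf : ∀ α, f (-α) = f α) (hg : ∀ α, g (-α) = g α)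
    (hfg : ∀ p ∈ Δ, ∀ q ∈ Δ, ∀ r ∈ Δ, p + q + r = 0 →
      wedge f g p q + wedge f g q r + wedge f g r p = 0) :
    Commute (weightedCasimir Δ X f) (weightedCasimir Δ X g) := by
  classical
  set τ : M → M → R := fun p q ↦ (wedge f g p q * N (-p) (-q)) •
    anticomm (X p) (anticomm (X q) (X (-(p + q)))) with hτ
  set G : M × M → R := fun x ↦ (N x.1 x.2 * N (-x.1) (-x.2)) •
    (wedge f g x.1 x.2 • ⁅X (x.1 + x.2), X (-(x.1 + x.2))⁆
      - wedge f g (-(x.1 + x.2)) x.1 • ⁅X (-x.1), X x.1⁆) with hG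
  have hτG : ∀ x ∈ Δ.zeroSumPairs,
      τ x.1 x.2 + τ x.2 (-(x.1 + x.2)) + τ (-(x.1 + x.2)) x.1 = G x := by
    rintro ⟨p, q⟩ hx
    obtain ⟨hp, hq, hr⟩ := mem_zeroSumPairs.1 hx
    have h := cyclic_anticomm_sum_of_add_add_eq_zero X hbr hcyc hfg hΔ hp hq hr
      (add_neg_cancel (p + q))
    have e₁ : -(q + -(p + q)) = p := by abel
    have e₂ : -(-(p + q) + p) = q := by abel
    simp only [hτ, hG, e₁, e₂]
    simpa only [neg_neg] using h
  have hGodd : ∀ x ∈ Δ.zeroSumPairs, G (-x) = -G x := by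
    rintro ⟨p, q⟩ -
    simp only [hG, Prod.fst_neg, Prod.snd_neg, ← neg_add, wedge_neg_neg hf hg]
    simp only [neg_neg]
    rw [← lie_skew (X (-(p + q))), ← lie_skew (X p), mul_comm]
    module
  have h6 : 6 • ⁅weightedCasimir Δ X f, weightedCasimir Δ X g⁆ = 0 := calc
    6 • ⁅weightedCasimir Δ X f, weightedCasimir Δ X g⁆
      = 3 • ∑ x ∈ Δ.zeroSumPairs, τ x.1 x.2 := by
        rw [show 6 = 2 * 3 from rfl, mul_nsmul, two_nsmul_lie_weightedCasimir X hΔ hf hg,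
          sum_sum_smul_anticomm_eq_sum_zeroSumPairs X hΔ hbr hvanish
            fun α _ ↦ wedge_neg_right hf hg α]
    _ = ∑ x ∈ Δ.zeroSumPairs, G x := by rw [three_nsmul_sum_zeroSumPairs, sum_congr rfl hτG]
    _ = 0 := sum_eq_zero_of_odd (fun x ↦ neg_mem_zeroSumPairs hΔ) hGodd
  exact commute_iff_lie_eq.2 ((smul_eq_zero.1 h6).resolve_left (by norm_num))

theorem weightedCasimir_eq_two_nsmul_add {P : Finset M} (hPΔ : P ⊆ Δ) (hΔ : ∀ α ∈ Δ, -α ∈ Δ)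
    (hsplit : ∀ α ∈ Δ, α ∈ P ∨ -α ∈ P) (hdisj : ∀ α ∈ P, -α ∉ P) (hf : ∀ α, f (-α) = f α) :
    weightedCasimir Δ X f
      = 2 • ∑ α ∈ P, f α • (X (-α) * X α) + ∑ α ∈ P, f α • ⁅X α, X (-α)⁆ := by
  rw [weightedCasimir, sum_eq_sum_add_comp_neg hPΔ hΔ hsplit hdisj, two_nsmul,
    ← sum_add_distrib, ← sum_add_distrib]
  refine sum_congr rfl fun α _ ↦ ?_
  rw [neg_neg, hf, Ring.lie_def]
  module

theorem commute_sum_of_commute_weightedCasimir [IsAddTorsionFree R] {P : Finset M}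
    (hPΔ : P ⊆ Δ) (hΔ : ∀ α ∈ Δ, -α ∈ Δ) (hsplit : ∀ α ∈ Δ, α ∈ P ∨ -α ∈ P)
    (hdisj : ∀ α ∈ P, -α ∉ P) (hf : ∀ α, f (-α) = f α) (hg : ∀ α, g (-α) = g α)
    (hcartan : ∀ α ∈ P, ∀ β ∈ Δ, Commute ⁅X α, X (-α)⁆ (X (-β) * X β))
    (hfg : Commute (weightedCasimir Δ X f) (weightedCasimir Δ X g)) :
    Commute (∑ α ∈ P, f α • (X (-α) * X α)) (∑ α ∈ P, g α • (X (-α) * X α)) := by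
  have hC : ∀ (c d : M → K) (s : Finset M), s ⊆ Δ →
      Commute (∑ α ∈ P, c α • ⁅X α, X (-α)⁆) (∑ β ∈ s, d β • (X (-β) * X β)) :=
    fun c d s hs ↦ .sum_left _ _ _ fun α hα ↦ .sum_right _ _ _ fun β hβ ↦
      ((hcartan α hα β (hs hβ)).smul_left _).smul_right _
  have hAf := eq_sub_of_add_eq (weightedCasimir_eq_two_nsmul_add X hPΔ hΔ hsplit hdisj hf).symm
  have hAg := eq_sub_of_add_eq (weightedCasimir_eq_two_nsmul_add X hPΔ hΔ hsplit hdisj hg).symm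
  have h2 : Commute (2 • ∑ α ∈ P, f α • (X (-α) * X α))
      (2 • ∑ α ∈ P, g α • (X (-α) * X α)) := by
    rw [hAf]
    refine .sub_left ?_ ((hC f g P hPΔ).smul_right 2)
    rw [hAg]
    exact hfg.sub_right (hC g f Δ subset_rfl).symm
  rw [commute_iff_lie_eq, nsmul_lie, lie_nsmul, smul_smul] at h2
  exact commute_iff_lie_eq.2 ((smul_eq_zero.1 h2).resolve_left (by norm_num))

end WeightedCasimir

theorem wedge_div_cyclic_sum_eq_zero {K H : Type*} [Field K] [AddCommGroup H] [Module K H]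
    (μ μ' μ'' : H) {p q r : Module.Dual K H} (hp : p μ ≠ 0) (hq : q μ ≠ 0) (hr : r μ ≠ 0)
    (hpqr : p + q + r = 0) :
    wedge (fun α ↦ α μ' / α μ) (fun α ↦ α μ'' / α μ) p q
      + wedge (fun α ↦ α μ' / α μ) (fun α ↦ α μ'' / α μ) q r
      + wedge (fun α ↦ α μ' / α μ) (fun α ↦ α μ'' / α μ) r p = 0 := by
  obtain rfl : r = -(p + q) := eq_neg_of_add_eq_zero_right hpqr
  simp only [wedge, LinearMap.neg_apply, LinearMap.add_apply, neg_ne_zero] at hr ⊢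
  field_simp
  ring

theorem structureConstant_cyclic {K L M : Type*} [CommRing K] [LieRing L] [LieAlgebra K L]
    [AddCommGroup M] {Δ : Finset M} {e : M → L} {N : M → M → K} (B : L →ₗ[K] L →ₗ[K] K)
    (hBinv : ∀ x y z : L, B ⁅x, y⁆ z = B x ⁅y, z⁆) (hΔ : ∀ α ∈ Δ, -α ∈ Δ)
    (hnorm : ∀ α ∈ Δ, B (e α) (e (-α)) = 1)
    (hbr : ∀ α ∈ Δ, ∀ β ∈ Δ, α + β ∈ Δ → ⁅e α, e β⁆ = N α β • e (α + β))
    {p q r : M} (hp : p ∈ Δ) (hq : q ∈ Δ) (hr : r ∈ Δ) (hpqr : p + q + r = 0) :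
    N p q = N q r := by
  have hpq : p + q = -r := eq_neg_of_add_eq_zero_left hpqr
  have hqr : q + r = -p := eq_neg_of_add_eq_zero_left (by rw [← hpqr]; abel)
  have hnorm_neg := hnorm (-r) (hΔ r hr)
  rw [neg_neg] at hnorm_neg
  calc N p q = B ⁅e p, e q⁆ (e r) := by
        rw [hbr p hp q hq (hpq ▸ hΔ r hr), hpq, map_smul, LinearMap.smul_apply, smul_eq_mul,
          hnorm_neg, mul_one]
    _ = B (e p) ⁅e q, e r⁆ := hBinv _ _ _
    _ = N q r := by
        rw [hbr q hq r hr (hqr ▸ hΔ p hp), hqr, map_smul, smul_eq_mul, hnorm p hp, mul_one]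

theorem dynamical_operators_commute_general
    {H : Type*} [AddCommGroup H] [Module ℂ H]
    {L : Type*} [LieRing L] [LieAlgebra ℂ L]
    {V : Type*} [AddCommGroup V] [Module ℂ V]
    (Δ Δplus : Finset (Module.Dual ℂ H))
    (hpos : Δplus ⊆ Δ) (hsplit : ∀ α ∈ Δ, α ∈ Δplus ∨ -α ∈ Δplus)
    (hdisj : ∀ α ∈ Δplus, -α ∉ Δplus)
    (e : Module.Dual ℂ H → L) (hc : H →ₗ[ℂ] L)
    (B : L →ₗ[ℂ] L →ₗ[ℂ] ℂ)
    (hBinv : ∀ x y z : L, B ⁅x, y⁆ z = B x ⁅y, z⁆)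
    (hnegmem : ∀ α ∈ Δ, -α ∈ Δ)
    (hnorm : ∀ α ∈ Δ, B (e α) (e (-α)) = 1)
    (N : Module.Dual ℂ H → Module.Dual ℂ H → ℂ)
    (hbr : ∀ α ∈ Δ, ∀ β ∈ Δ, α + β ∈ Δ → ⁅e α, e β⁆ = N α β • e (α + β))
    (hvanish : ∀ α ∈ Δ, ∀ β ∈ Δ, α + β ≠ 0 → α + β ∉ Δ → ⁅e α, e β⁆ = 0)
    (t : Module.Dual ℂ H → H)
    (hcartan : ∀ α ∈ Δ, ⁅e α, e (-α)⁆ = hc (t α))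
    (hweight : ∀ α ∈ Δ, ∀ x : H, ⁅hc x, e α⁆ = α x • e α)
    (ρ : L →ₗ⁅ℂ⁆ Module.End ℂ V)
    (μ : H) (hreg : ∀ α ∈ Δ, α μ ≠ 0) (μ' μ'' : H) :
    Commute
      (∑ α ∈ Δplus, (α μ' / α μ) • (ρ (e (-α)) * ρ (e α)))
      (∑ α ∈ Δplus, (α μ'' / α μ) • (ρ (e (-α)) * ρ (e α))) := by
  classical
  have : IsAddTorsionFree (Module.End ℂ V) := .of_isTorsionFree ℂ _
  have hX : ∀ x y : L, ⁅ρ x, ρ y⁆ = ρ ⁅x, y⁆ := fun x y ↦ (ρ.map_lie x y).symm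
  have heven : ∀ ν : H, ∀ α : Module.Dual ℂ H, -α ν / -α μ = α ν / α μ :=
    fun ν α ↦ neg_div_neg_eq _ _
  have hcartanX : ∀ α ∈ Δplus, ∀ β ∈ Δ,
      Commute ⁅ρ (e α), ρ (e (-α))⁆ (ρ (e (-β)) * ρ (e β)) := fun α hα β hβ ↦ by
    rw [hX, hcartan α (hpos hα)]
    refine commute_mul_of_lie_eq_smul (c := β (t α)) ?_ ?_
    · rw [hX, hweight _ (hnegmem β hβ), map_smul, LinearMap.neg_apply]
    · rw [hX, hweight _ hβ, map_smul]
  refine commute_sum_of_commute_weightedCasimir (fun α ↦ ρ (e α)) hpos hnegmem hsplit hdisj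
    (heven μ') (heven μ'') hcartanX (commute_weightedCasimir _ (N := N) hnegmem ?_ ?_ ?_
      (heven μ') (heven μ'') ?_)
  · intro α hα β hβ hαβ
    rw [hX, hbr α hα β hβ hαβ, map_smul]
  · intro α hα β hβ h₀ hαβ
    rw [hX, hvanish α hα β hβ h₀ hαβ, map_zero]
  · exact fun p hp q hq r hr ↦ structureConstant_cyclic B hBinv hnegmem hnorm hbr hp hq hr
  · exact fun p hp q hq r hr ↦
      wedge_div_cyclic_sum_eq_zero μ μ' μ'' (hreg p hp) (hreg q hq) (hreg r hr)

theorem dynamical_operators_commute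
    {H : Type*} [AddCommGroup H] [Module ℂ H]
    {L : Type*} [LieRing L] [LieAlgebra ℂ L]
    {V : Type*} [AddCommGroup V] [Module ℂ V]
    (Δ Δplus : Finset (Module.Dual ℂ H))
    (hpos : Δplus ⊆ Δ) (hsplit : ∀ α ∈ Δ, α ∈ Δplus ∨ -α ∈ Δplus)
    (hdisj : ∀ α ∈ Δplus, -α ∉ Δplus) (h0 : (0 : Module.Dual ℂ H) ∉ Δ)
    (e : Module.Dual ℂ H → L) (hc : H →ₗ[ℂ] L)
    (B : L →ₗ[ℂ] L →ₗ[ℂ] ℂ)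
    (hBsymm : ∀ x y : L, B x y = B y x)
    (hBinv : ∀ x y z : L, B ⁅x, y⁆ z = B x ⁅y, z⁆)
    (hnegmem : ∀ α ∈ Δ, -α ∈ Δ)
    (hnorm : ∀ α ∈ Δ, B (e α) (e (-α)) = 1)
    (N : Module.Dual ℂ H → Module.Dual ℂ H → ℂ)
    (hbr : ∀ α ∈ Δ, ∀ β ∈ Δ, α + β ∈ Δ → ⁅e α, e β⁆ = N α β • e (α + β))
    (hvanish : ∀ α ∈ Δ, ∀ β ∈ Δ, α + β ≠ 0 → α + β ∉ Δ → ⁅e α, e β⁆ = 0)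
    (t : Module.Dual ℂ H → H)
    (hcartan : ∀ α ∈ Δ, ⁅e α, e (-α)⁆ = hc (t α))
    (hweight : ∀ α ∈ Δ, ∀ x : H, ⁅hc x, e α⁆ = α x • e α)
    (ρ : L →ₗ⁅ℂ⁆ Module.End ℂ V)
    (μ : H) (hreg : ∀ α ∈ Δ, α μ ≠ 0) (μ' μ'' : H) :
    Commute
      (∑ α ∈ Δplus, (α μ' / α μ) • (ρ (e (-α)) * ρ (e α)))
      (∑ α ∈ Δplus, (α μ'' / α μ) • (ρ (e (-α)) * ρ (e α))) :=
  dynamical_operators_commute_general Δ Δplus hpos hsplit hdisj e hc B hBinv hnegmem hnorm N hbr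
    hvanish t hcartan hweight ρ μ hreg μ' μ''
end

section
/- Let S be the contravariant form on M = M(Λ_1) ⊗ ... ⊗ M(Λ_n) (product of the contravariant forms on the factors), and let y ∈ n_− lie in the kernel of the contravariant form S: n_− → n_−*. Then y·M ⊆ ker(S: M → M*). -/
noncomputable section

namespace KacMoodyFree

inductive Gen (H : Type*) (r : ℕ) : Type _
  | e : Fin r → Gen H r
  | f : Fin r → Gen H r
  | h : H → Gen H r

variable {H : Type*} [AddCommGroup H] [Module ℂ H] {r : ℕ}

/-- Defining relations of the Kac–Moody Lie algebra without Serre relations. -/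
def rels (α : Fin r → Module.Dual ℂ H) (hv : Fin r → H) :
    Set (FreeLieAlgebra ℂ (Gen H r)) :=
  let of : Gen H r → FreeLieAlgebra ℂ (Gen H r) := FreeLieAlgebra.of ℂ
  {x | (∃ a b : H, x = of (Gen.h (a + b)) - of (Gen.h a) - of (Gen.h b)) ∨
       (∃ (c : ℂ) (a : H), x = of (Gen.h (c • a)) - c • of (Gen.h a)) ∨
       (∃ a b : H, x = ⁅of (Gen.h a), of (Gen.h b)⁆) ∨
       (∃ (a : H) (i : Fin r), x = ⁅of (Gen.h a), of (Gen.e i)⁆ - α i a • of (Gen.e i)) ∨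
       (∃ (a : H) (i : Fin r), x = ⁅of (Gen.h a), of (Gen.f i)⁆ + α i a • of (Gen.f i)) ∨
       (∃ i j : Fin r, x = ⁅of (Gen.e i), of (Gen.f j)⁆ -
          (if i = j then of (Gen.h (hv i)) else 0))}

def relIdeal (α : Fin r → Module.Dual ℂ H) (hv : Fin r → H) :
    LieIdeal ℂ (FreeLieAlgebra ℂ (Gen H r)) :=
  LieSubmodule.lieSpan ℂ _ (rels α hv)

/-- The Kac–Moody Lie algebra without Serre relations. -/
def KM (α : Fin r → Module.Dual ℂ H) (hv : Fin r → H) : Type _ :=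
  FreeLieAlgebra ℂ (Gen H r) ⧸ relIdeal α hv

variable (α : Fin r → Module.Dual ℂ H) (hv : Fin r → H)

instance : LieRing (KM α hv) :=
  inferInstanceAs (LieRing (FreeLieAlgebra ℂ (Gen H r) ⧸ relIdeal α hv))
instance : LieAlgebra ℂ (KM α hv) :=
  inferInstanceAs (LieAlgebra ℂ (FreeLieAlgebra ℂ (Gen H r) ⧸ relIdeal α hv))

def E (i : Fin r) : KM α hv :=
  LieSubmodule.Quotient.mk' (relIdeal α hv) (FreeLieAlgebra.of ℂ (Gen.e i))

def F (i : Fin r) : KM α hv :=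
  LieSubmodule.Quotient.mk' (relIdeal α hv) (FreeLieAlgebra.of ℂ (Gen.f i))

def Hg (x : H) : KM α hv :=
  LieSubmodule.Quotient.mk' (relIdeal α hv) (FreeLieAlgebra.of ℂ (Gen.h x))

end KacMoodyFree

open KacMoodyFree

/-!
Put `z = -τ y`. Contravariance of the factor forms for the generators propagates to
`SM (y·p) q = SM p (z·q)`, and `z` lies in `n₊` and is `K`-orthogonal to `n₋` because
`Sg y = 0` on `n₋`. Such elements form a set stable under `z ↦ [z, f_i]`: by invariance
`[z, f_i]` is again orthogonal to `n₋`, and its `h`-component `c·h_i` pairs with `h_a` to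
`c·α_i(a)`, which must vanish as it equals `K(z, [f_i, h_a]) = α_i(a)·K(z, f_i) = 0`.
Writing `m = f_{i₁}⋯f_{i_k}·v` and moving the `f`'s to the left as `e`'s one by one, this
stability gives `S_j(·, z·m) = 0` on every Verma factor, hence `SM(p, z·q) = 0`.
-/

theorem Submodule.mem_of_surjective_freeAlgebra {R X M : Type*} [CommSemiring R]
    [AddCommMonoid M] [Module R M] (φ : FreeAlgebra R X →ₗ[R] M)
    (hφ : Function.Surjective φ) (T : X → M → M)
    (hφι : ∀ i w, φ (FreeAlgebra.ι R i * w) = T i (φ w)) (p : Submodule R M)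
    (h1 : φ 1 ∈ p) (hT : ∀ i, ∀ m ∈ p, T i m ∈ p) (m : M) : m ∈ p := by
  suffices h : ∀ u w, φ w ∈ p → φ (u * w) ∈ p by
    obtain ⟨u, rfl⟩ := hφ m
    simpa using h u 1 h1
  intro u
  induction u using FreeAlgebra.induction with
  | grade0 c => intro w hw; rw [← Algebra.smul_def, map_smul]; exact p.smul_mem c hw
  | grade1 i => intro w hw; rw [hφι]; exact hT i _ hw
  | mul a b ha hb => intro w hw; rw [mul_assoc]; exact ha _ (hb w hw)
  | add a b ha hb => intro w hw; rw [add_mul, map_add]; exact p.add_mem (ha w hw) (hb w hw)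

section LieModule

variable {R L : Type*} [CommRing R] [LieRing L] [LieAlgebra R L]
variable {M : Type*} [AddCommGroup M] [Module R M]

theorem lie_eq_zero_of_mem_lieSpan [LieRingModule L M] [LieModule R L M] {s : Set L} {v : M}
    (hs : ∀ x ∈ s, ⁅x, v⁆ = 0) {z : L} (hz : z ∈ LieSubalgebra.lieSpan R L s) :
    ⁅z, v⁆ = 0 := by
  induction hz using LieSubalgebra.lieSpan_induction with
  | mem x hx => exact hs x hx
  | zero => exact zero_lie v
  | add x y _ _ hx hy => rw [add_lie, hx, hy, add_zero]
  | smul c x _ hx => rw [smul_lie, hx, smul_zero]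
  | lie x y _ _ hx hy => rw [lie_lie, hx, hy, lie_zero, lie_zero, sub_zero]

theorem form_lie_eq_zero_of_mem {X : Type*} [LieRingModule L M] [LieModule R L M]
    (e f : X → L) (S : M →ₗ[R] M →ₗ[R] R)
    (hS : ∀ i, LinearMap.IsAdjointPair S S (fun m ↦ ⁅e i, m⁆) (fun m ↦ ⁅f i, m⁆))
    (φ : FreeAlgebra R X →ₗ[R] M) (hφ : Function.Surjective φ)
    (hφι : ∀ i w, φ (FreeAlgebra.ι R i * w) = ⁅f i, φ w⁆)
    (Z : Set L) (hZv : ∀ z ∈ Z, ⁅z, φ 1⁆ = 0) (hZf : ∀ z ∈ Z, ∀ i, ⁅z, f i⁆ ∈ Z)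
    {z : L} (hz : z ∈ Z) (x m : M) : S x ⁅z, m⁆ = 0 := by
  let p : Submodule R M :=
    { carrier := {m | ∀ z ∈ Z, ∀ x, S x ⁅z, m⁆ = 0}
      add_mem' := fun ha hb z hz x ↦ by rw [lie_add, map_add, ha z hz, hb z hz, add_zero]
      zero_mem' := fun z _ x ↦ by rw [lie_zero, map_zero]
      smul_mem' := fun c m hm z hz x ↦ by rw [lie_smul, map_smul, hm z hz, smul_zero] }
  refine Submodule.mem_of_surjective_freeAlgebra φ hφ (fun i m ↦ ⁅f i, m⁆) hφι p
    (fun z hz x ↦ by rw [hZv z hz, map_zero]) (fun i m hm z hz x ↦ ?_) m z hz x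
  calc S x ⁅z, ⁅f i, m⁆⁆ = S x ⁅⁅z, f i⁆, m⁆ + S x ⁅f i, ⁅z, m⁆⁆ := by rw [leibniz_lie, map_add]
    _ = 0 := by rw [hm _ (hZf z hz i), ← hS, hm z hz, add_zero]

theorem isAdjointPair_act_neg_map_of_mem_lieSpan (B : M →ₗ[R] M →ₗ[R] R)
    (act : L →ₗ[R] Module.End R M) (hact : ∀ x y, act ⁅x, y⁆ = ⁅act x, act y⁆)
    (τ : L →ₗ⁅R⁆ L) {s : Set L}
    (hs : ∀ x ∈ s, LinearMap.IsAdjointPair B B (act x) (act (-τ x)))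
    {y : L} (hy : y ∈ LieSubalgebra.lieSpan R L s) :
    LinearMap.IsAdjointPair B B (act y) (act (-τ y)) := by
  induction hy using LieSubalgebra.lieSpan_induction with
  | mem x hx => exact hs x hx
  | zero => intro p q; simp
  | add x y _ _ hx hy => intro p q; simp [hx p q, hy p q, add_comm]
  | smul c x _ hx => intro p q; simp [hx p q]
  | lie a b _ _ ha hb =>
    intro p q
    have hτ : -τ ⁅a, b⁆ = ⁅-τ b, -τ a⁆ := by
      rw [LieHom.map_lie, neg_lie, lie_neg, neg_neg, lie_skew]
    simp only [hτ, hact, Ring.lie_def, LinearMap.sub_apply, Module.End.mul_apply, map_sub,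
      ha _ _, hb _ _]

end LieModule

section PiTensorProduct

variable {R L ι : Type*} [CommRing R] [LieRing L] [LieAlgebra R L] [Fintype ι] [DecidableEq ι]
variable {M : ι → Type*} [∀ j, AddCommGroup (M j)] [∀ j, Module R (M j)]
variable [∀ j, LieRingModule L (M j)]

open PiTensorProduct in
theorem PiTensorProduct.isAdjointPair_act (act : L →ₗ[R] Module.End R (PiTensorProduct R M))
    (hact : ∀ (x : L) (f : ∀ j, M j),
      act x (tprod R f) = ∑ j, tprod R (Function.update f j ⁅x, f j⁆))
    (S : ∀ j, M j →ₗ[R] M j →ₗ[R] R) (SM : PiTensorProduct R M →ₗ[R] PiTensorProduct R M →ₗ[R] R)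
    (hSM : ∀ f g : ∀ j, M j, SM (tprod R f) (tprod R g) = ∏ j, S j (f j) (g j))
    {x x' : L} (h : ∀ j, LinearMap.IsAdjointPair (S j) (S j) (fun m ↦ ⁅x, m⁆) (fun m ↦ ⁅x', m⁆)) :
    LinearMap.IsAdjointPair SM SM (act x) (act x') := by
  rw [LinearMap.isAdjointPair_iff_comp_eq_compl₂]
  ext f g
  simp only [LinearMap.compMultilinearMap_apply, LinearMap.comp_apply, LinearMap.compl₂_apply,
    hact, map_sum, LinearMap.sum_apply, hSM]
  refine Finset.sum_congr rfl fun j _ ↦ Finset.prod_congr rfl fun k _ ↦ ?_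
  rcases eq_or_ne k j with rfl | hkj
  · simp only [Function.update_self, h k (f k) (g k)]
  · simp only [Function.update_of_ne hkj]

end PiTensorProduct

namespace KacMoodyFree

variable {H : Type*} [AddCommGroup H] [Module ℂ H] {r : ℕ}
variable (α : Fin r → Module.Dual ℂ H) (hv : Fin r → H)

theorem mk'_eq_of_sub_mem_rels {x y : FreeLieAlgebra ℂ (Gen H r)} (h : x - y ∈ rels α hv) :
    LieSubmodule.Quotient.mk' (relIdeal α hv) x = LieSubmodule.Quotient.mk' (relIdeal α hv) y :=
  (Submodule.Quotient.eq _).mpr (LieSubmodule.subset_lieSpan h)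

theorem lie_Hg_E (a : H) (i : Fin r) : ⁅Hg α hv a, E α hv i⁆ = α i a • E α hv i := by
  have h := mk'_eq_of_sub_mem_rels α hv (x := ⁅FreeLieAlgebra.of ℂ (Gen.h a),
      FreeLieAlgebra.of ℂ (Gen.e (H := H) i)⁆) (y := α i a • FreeLieAlgebra.of ℂ (Gen.e i))
    (Or.inr (Or.inr (Or.inr (Or.inl ⟨a, i, rfl⟩))))
  rwa [map_smul] at h

theorem lie_Hg_F (a : H) (i : Fin r) : ⁅Hg α hv a, F α hv i⁆ = -(α i a • F α hv i) := by
  have h := mk'_eq_of_sub_mem_rels α hv (x := ⁅FreeLieAlgebra.of ℂ (Gen.h a),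
      FreeLieAlgebra.of ℂ (Gen.f (H := H) i)⁆) (y := -(α i a • FreeLieAlgebra.of ℂ (Gen.f i)))
    (by rw [sub_neg_eq_add]; exact Or.inr (Or.inr (Or.inr (Or.inr (Or.inl ⟨a, i, rfl⟩)))))
  rwa [map_neg, map_smul] at h

theorem lie_E_F (i j : Fin r) :
    ⁅E α hv i, F α hv j⁆ = if i = j then Hg α hv (hv i) else 0 := by
  have h := mk'_eq_of_sub_mem_rels α hv (x := ⁅FreeLieAlgebra.of ℂ (Gen.e (H := H) i),
      FreeLieAlgebra.of ℂ (Gen.f (H := H) j)⁆)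
      (y := if i = j then FreeLieAlgebra.of ℂ (Gen.h (hv i)) else 0)
    (Or.inr (Or.inr (Or.inr (Or.inr (Or.inr ⟨i, j, rfl⟩)))))
  rwa [apply_ite (LieSubmodule.Quotient.mk' (relIdeal α hv)), map_zero] at h

abbrev nPlus : LieSubalgebra ℂ (KM α hv) :=
  LieSubalgebra.lieSpan ℂ (KM α hv) (Set.range (E α hv))

abbrev nMinus : LieSubalgebra ℂ (KM α hv) :=
  LieSubalgebra.lieSpan ℂ (KM α hv) (Set.range (F α hv))

theorem E_mem_nPlus (i : Fin r) : E α hv i ∈ nPlus α hv :=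
  LieSubalgebra.subset_lieSpan ⟨i, rfl⟩

theorem F_mem_nMinus (i : Fin r) : F α hv i ∈ nMinus α hv :=
  LieSubalgebra.subset_lieSpan ⟨i, rfl⟩

variable {α hv}

theorem lie_Hg_mem_nPlus {z : KM α hv} (hz : z ∈ nPlus α hv) (a : H) :
    ⁅z, Hg α hv a⁆ ∈ nPlus α hv := by
  induction hz using LieSubalgebra.lieSpan_induction with
  | mem x hx =>
    obtain ⟨i, rfl⟩ := hx
    rw [← lie_skew, lie_Hg_E]
    exact neg_mem (LieSubalgebra.smul_mem _ _ (E_mem_nPlus α hv i))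
  | zero => rw [zero_lie]; exact zero_mem _
  | add x y _ _ hx hy => rw [add_lie]; exact add_mem hx hy
  | smul c x _ hx => rw [smul_lie]; exact LieSubalgebra.smul_mem _ c hx
  | lie x y hxn hyn hx hy =>
    rw [lie_lie]
    exact sub_mem (LieSubalgebra.lie_mem _ hxn hy) (LieSubalgebra.lie_mem _ hyn hx)

theorem exists_lie_F_eq {z : KM α hv} (hz : z ∈ nPlus α hv) (i : Fin r) :
    ∃ z' ∈ nPlus α hv, ∃ c : ℂ, ⁅z, F α hv i⁆ = z' + c • Hg α hv (hv i) := by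
  induction hz using LieSubalgebra.lieSpan_induction with
  | mem x hx =>
    obtain ⟨j, rfl⟩ := hx
    refine ⟨0, zero_mem _, if j = i then 1 else 0, ?_⟩
    rw [lie_E_F, zero_add, ite_smul, one_smul, zero_smul]
    split_ifs with hji
    · rw [hji]
    · rfl
  | zero => exact ⟨0, zero_mem _, 0, by rw [zero_lie, zero_smul, zero_add]⟩
  | add x y _ _ hx hy =>
    obtain ⟨x', hx', c, hc⟩ := hx
    obtain ⟨y', hy', d, hd⟩ := hy
    exact ⟨x' + y', add_mem hx' hy', c + d, by rw [add_lie, hc, hd, add_smul]; abel⟩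
  | smul a x _ hx =>
    obtain ⟨x', hx', c, hc⟩ := hx
    exact ⟨a • x', LieSubalgebra.smul_mem _ a hx', a * c, by rw [smul_lie, hc, smul_add, smul_smul]⟩
  | lie x y hxn hyn hx hy =>
    obtain ⟨x', hx', c, hc⟩ := hx
    obtain ⟨y', hy', d, hd⟩ := hy
    refine ⟨⁅x, y'⁆ + d • ⁅x, Hg α hv (hv i)⁆ - (⁅y, x'⁆ + c • ⁅y, Hg α hv (hv i)⁆), ?_, 0, ?_⟩
    · have hxH := LieSubalgebra.smul_mem _ d (lie_Hg_mem_nPlus hxn (hv i))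
      have hyH := LieSubalgebra.smul_mem _ c (lie_Hg_mem_nPlus hyn (hv i))
      exact sub_mem (add_mem (LieSubalgebra.lie_mem _ hxn hy') hxH)
        (add_mem (LieSubalgebra.lie_mem _ hyn hx') hyH)
    · rw [lie_lie, hc, hd, lie_add, lie_add, lie_smul, lie_smul, zero_smul, add_zero]

theorem neg_map_mem_nPlus (τ : KM α hv →ₗ⁅ℂ⁆ KM α hv) (hτ : ∀ i, τ (F α hv i) = -E α hv i)
    {y : KM α hv} (hy : y ∈ nMinus α hv) : -τ y ∈ nPlus α hv := by
  have h : nMinus α hv ≤ (nPlus α hv).comap τ := by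
    rw [LieSubalgebra.lieSpan_le]
    rintro _ ⟨i, rfl⟩
    rw [SetLike.mem_coe, LieSubalgebra.mem_comap, hτ]
    exact neg_mem (E_mem_nPlus α hv i)
  exact neg_mem (h hy)

variable (α hv) in
def nPlusKer (K : KM α hv →ₗ[ℂ] KM α hv →ₗ[ℂ] ℂ) : Set (KM α hv) :=
  {z | z ∈ nPlus α hv ∧ ∀ x ∈ nMinus α hv, K z x = 0}

theorem lie_F_mem_nPlusKer {K : KM α hv →ₗ[ℂ] KM α hv →ₗ[ℂ] ℂ}
    (hK : ∀ x y z, K ⁅x, y⁆ z = K x ⁅y, z⁆)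
    (hKnH : ∀ z ∈ nPlus α hv, ∀ a, K z (Hg α hv a) = 0) {i : Fin r}
    (hKH : ∀ a, K (Hg α hv (hv i)) (Hg α hv a) = α i a) (hα : α i ≠ 0)
    {z : KM α hv} (hz : z ∈ nPlusKer α hv K) : ⁅z, F α hv i⁆ ∈ nPlusKer α hv K := by
  obtain ⟨hzn, hzK⟩ := hz
  obtain ⟨z', hz', c, hc⟩ := exists_lie_F_eq hzn i
  have hK' : ∀ x ∈ nMinus α hv, K ⁅z, F α hv i⁆ x = 0 := fun x hx ↦ by
    rw [hK]; exact hzK _ (LieSubalgebra.lie_mem _ (F_mem_nMinus α hv i) hx)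
  obtain ⟨a, ha⟩ : ∃ a, α i a ≠ 0 := by
    by_contra! h
    exact hα (LinearMap.ext h)
  have hc0 : c = 0 := by
    have h0 : K ⁅z, F α hv i⁆ (Hg α hv a) = 0 := by
      rw [hK, ← lie_skew, lie_Hg_F, neg_neg, map_smul, hzK _ (F_mem_nMinus α hv i), smul_zero]
    have h : K ⁅z, F α hv i⁆ (Hg α hv a) = c * α i a := by
      rw [hc, map_add, LinearMap.add_apply, hKnH z' hz', zero_add, map_smul,
        LinearMap.smul_apply, hKH, smul_eq_mul]
    exact (mul_eq_zero.mp (h.symm.trans h0)).resolve_right ha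
  refine ⟨?_, hK'⟩
  rwa [hc, hc0, zero_smul, add_zero]

end KacMoodyFree

theorem kernel_of_contravariant_form_acts_into_kernel_general
    {H : Type*} [AddCommGroup H] [Module ℂ H] {r n : ℕ}
    (B : H →ₗ[ℂ] H →ₗ[ℂ] ℂ)
    (α : Fin r → Module.Dual ℂ H) (hind : LinearIndependent ℂ α)
    (hv : Fin r → H) (hhv : ∀ (i : Fin r) (x : H), B (hv i) x = α i x)
    -- the automorphism τ
    (τ : KM α hv ≃ₗ⁅ℂ⁆ KM α hv)
    (hτf : ∀ i, τ (F α hv i) = - E α hv i)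
    -- the invariant bilinear form K
    (K : KM α hv →ₗ[ℂ] KM α hv →ₗ[ℂ] ℂ)
    (hKinv : ∀ x y z : KM α hv, K ⁅x, y⁆ z = K x ⁅y, z⁆)
    (hKh : ∀ x y : H, K (Hg α hv x) (Hg α hv y) = B x y)
    (hKhn : ∀ (a : H), ∀ y, (y ∈ LieSubalgebra.lieSpan ℂ (KM α hv) (Set.range (F α hv)) ∨
            y ∈ LieSubalgebra.lieSpan ℂ (KM α hv) (Set.range (E α hv))) →
            K (Hg α hv a) y = 0 ∧ K y (Hg α hv a) = 0)
    -- the contravariant form on g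
    (Sg : KM α hv →ₗ[ℂ] KM α hv →ₗ[ℂ] ℂ)
    (hSg : ∀ x y : KM α hv, Sg x y = - K (τ x) y)
    -- the Verma factors M(Λ_j)
    (Mj : Fin n → Type*) [∀ j, AddCommGroup (Mj j)] [∀ j, Module ℂ (Mj j)]
    [∀ j, LieRingModule (KM α hv) (Mj j)] [∀ j, LieModule ℂ (KM α hv) (Mj j)]
    (vj : ∀ j, Mj j)
    (hhw1 : ∀ (j) (i : Fin r), ⁅E α hv i, vj j⁆ = 0)
    (φ : ∀ j, FreeAlgebra ℂ (Fin r) ≃ₗ[ℂ] Mj j)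
    (hφ1 : ∀ j, φ j 1 = vj j)
    (hφmul : ∀ (j) (i : Fin r) (w : FreeAlgebra ℂ (Fin r)),
      φ j (FreeAlgebra.ι ℂ i * w) = ⁅F α hv i, φ j w⁆)
    -- the contravariant forms of the factors
    (Sj : ∀ j, Mj j →ₗ[ℂ] Mj j →ₗ[ℂ] ℂ)
    (hSje : ∀ (j) (i : Fin r) (x y : Mj j), Sj j ⁅E α hv i, x⁆ y = Sj j x ⁅F α hv i, y⁆)
    (hSjf : ∀ (j) (i : Fin r) (x y : Mj j), Sj j ⁅F α hv i, x⁆ y = Sj j x ⁅E α hv i, y⁆)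
    -- the tensor product module M and its contravariant form SM
    (act : KM α hv →ₗ[ℂ] Module.End ℂ (PiTensorProduct ℂ Mj))
    (hactLie : ∀ x y : KM α hv, act ⁅x, y⁆ = ⁅act x, act y⁆)
    (hact : ∀ (x : KM α hv) (f : (j : Fin n) → Mj j),
      act x (PiTensorProduct.tprod ℂ f) =
        ∑ j, PiTensorProduct.tprod ℂ (Function.update f j ⁅x, f j⁆))
    (SM : PiTensorProduct ℂ Mj →ₗ[ℂ] PiTensorProduct ℂ Mj →ₗ[ℂ] ℂ)
    (hSM : ∀ f g : (j : Fin n) → Mj j,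
      SM (PiTensorProduct.tprod ℂ f) (PiTensorProduct.tprod ℂ g) = ∏ j, Sj j (f j) (g j)) :
    ∀ y ∈ LieSubalgebra.lieSpan ℂ (KM α hv) (Set.range (F α hv)),
      (∀ x ∈ LieSubalgebra.lieSpan ℂ (KM α hv) (Set.range (F α hv)), Sg y x = 0) →
      ∀ p q : PiTensorProduct ℂ Mj, SM (act y p) q = 0 := by
  intro y hy hker p q
  have hFE : ∀ i, LinearMap.IsAdjointPair SM SM (act (F α hv i)) (act (E α hv i)) := fun i ↦
    PiTensorProduct.isAdjointPair_act act hact Sj SM hSM fun j ↦ hSjf j i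
  have hyz : LinearMap.IsAdjointPair SM SM (act y) (act (-τ y)) :=
    isAdjointPair_act_neg_map_of_mem_lieSpan SM act hactLie τ.toLieHom
      (by rintro _ ⟨i, rfl⟩; simpa [hτf] using hFE i) hy
  have hz : -τ y ∈ nPlusKer α hv K :=
    ⟨neg_map_mem_nPlus τ.toLieHom hτf hy, fun x hx ↦ by
      rw [map_neg, LinearMap.neg_apply, ← hSg, hker x hx]⟩
  have hZ : ∀ z ∈ nPlusKer α hv K, ∀ i, ⁅z, F α hv i⁆ ∈ nPlusKer α hv K := fun z hz i ↦
    lie_F_mem_nPlusKer hKinv (fun z hz a ↦ (hKhn a z (Or.inr hz)).2)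
      (fun a ↦ (hKh _ a).trans (hhv i a)) (hind.ne_zero i) hz
  have hZv : ∀ j, ∀ z ∈ nPlusKer α hv K, ⁅z, vj j⁆ = 0 := fun j z hz ↦
    lie_eq_zero_of_mem_lieSpan (by rintro _ ⟨i, rfl⟩; exact hhw1 j i) hz.1
  have h0z : ∀ j, LinearMap.IsAdjointPair (Sj j) (Sj j) (fun m ↦ ⁅(0 : KM α hv), m⁆)
      (fun m ↦ ⁅-τ y, m⁆) := fun j a b ↦ by
    dsimp only
    rw [zero_lie, map_zero, LinearMap.zero_apply, form_lie_eq_zero_of_mem (E α hv) (F α hv) (Sj j)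
      (hSje j) (φ j).toLinearMap (φ j).surjective (hφmul j) _
      (by simpa only [LinearEquiv.coe_coe, hφ1] using hZv j) hZ hz]
  rw [hyz, ← PiTensorProduct.isAdjointPair_act act hact Sj SM hSM h0z, map_zero,
    LinearMap.zero_apply, map_zero, LinearMap.zero_apply]

theorem kernel_of_contravariant_form_acts_into_kernel
    {H : Type*} [AddCommGroup H] [Module ℂ H] {r n : ℕ}
    (B : H →ₗ[ℂ] H →ₗ[ℂ] ℂ) (hBsymm : ∀ x y : H, B x y = B y x)
    (α : Fin r → Module.Dual ℂ H) (hind : LinearIndependent ℂ α)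
    (hv : Fin r → H) (hhv : ∀ (i : Fin r) (x : H), B (hv i) x = α i x)
    -- the automorphism τ
    (τ : KM α hv ≃ₗ⁅ℂ⁆ KM α hv)
    (hτe : ∀ i, τ (E α hv i) = - F α hv i)
    (hτf : ∀ i, τ (F α hv i) = - E α hv i)
    (hτh : ∀ x : H, τ (Hg α hv x) = - Hg α hv x)
    -- the invariant bilinear form K
    (K : KM α hv →ₗ[ℂ] KM α hv →ₗ[ℂ] ℂ)
    (hKinv : ∀ x y z : KM α hv, K ⁅x, y⁆ z = K x ⁅y, z⁆)
    (hKh : ∀ x y : H, K (Hg α hv x) (Hg α hv y) = B x y)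
    (hKfe : ∀ i j : Fin r, K (F α hv i) (E α hv j) = if i = j then 1 else 0)
    (hKnn : ∀ x ∈ LieSubalgebra.lieSpan ℂ (KM α hv) (Set.range (F α hv)),
            ∀ y ∈ LieSubalgebra.lieSpan ℂ (KM α hv) (Set.range (F α hv)), K x y = 0)
    (hKpp : ∀ x ∈ LieSubalgebra.lieSpan ℂ (KM α hv) (Set.range (E α hv)),
            ∀ y ∈ LieSubalgebra.lieSpan ℂ (KM α hv) (Set.range (E α hv)), K x y = 0)
    (hKhn : ∀ (a : H), ∀ y, (y ∈ LieSubalgebra.lieSpan ℂ (KM α hv) (Set.range (F α hv)) ∨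
            y ∈ LieSubalgebra.lieSpan ℂ (KM α hv) (Set.range (E α hv))) →
            K (Hg α hv a) y = 0 ∧ K y (Hg α hv a) = 0)
    -- the contravariant form on g
    (Sg : KM α hv →ₗ[ℂ] KM α hv →ₗ[ℂ] ℂ)
    (hSg : ∀ x y : KM α hv, Sg x y = - K (τ x) y)
    -- the Verma factors M(Λ_j)
    (Mj : Fin n → Type*) [∀ j, AddCommGroup (Mj j)] [∀ j, Module ℂ (Mj j)]
    [∀ j, LieRingModule (KM α hv) (Mj j)] [∀ j, LieModule ℂ (KM α hv) (Mj j)]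
    (Λ : Fin n → Module.Dual ℂ H) (vj : ∀ j, Mj j)
    (hhw1 : ∀ (j) (i : Fin r), ⁅E α hv i, vj j⁆ = 0)
    (hhw2 : ∀ (j) (x : H), ⁅Hg α hv x, vj j⁆ = Λ j x • vj j)
    (φ : ∀ j, FreeAlgebra ℂ (Fin r) ≃ₗ[ℂ] Mj j)
    (hφ1 : ∀ j, φ j 1 = vj j)
    (hφmul : ∀ (j) (i : Fin r) (w : FreeAlgebra ℂ (Fin r)),
      φ j (FreeAlgebra.ι ℂ i * w) = ⁅F α hv i, φ j w⁆)
    -- the contravariant forms of the factors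
    (Sj : ∀ j, Mj j →ₗ[ℂ] Mj j →ₗ[ℂ] ℂ)
    (hSj1 : ∀ j, Sj j (vj j) (vj j) = 1)
    (hSje : ∀ (j) (i : Fin r) (x y : Mj j), Sj j ⁅E α hv i, x⁆ y = Sj j x ⁅F α hv i, y⁆)
    (hSjf : ∀ (j) (i : Fin r) (x y : Mj j), Sj j ⁅F α hv i, x⁆ y = Sj j x ⁅E α hv i, y⁆)
    -- the tensor product module M and its contravariant form SM
    (act : KM α hv →ₗ[ℂ] Module.End ℂ (PiTensorProduct ℂ Mj))
    (hactLie : ∀ x y : KM α hv, act ⁅x, y⁆ = ⁅act x, act y⁆)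
    (hact : ∀ (x : KM α hv) (f : (j : Fin n) → Mj j),
      act x (PiTensorProduct.tprod ℂ f) =
        ∑ j, PiTensorProduct.tprod ℂ (Function.update f j ⁅x, f j⁆))
    (SM : PiTensorProduct ℂ Mj →ₗ[ℂ] PiTensorProduct ℂ Mj →ₗ[ℂ] ℂ)
    (hSM : ∀ f g : (j : Fin n) → Mj j,
      SM (PiTensorProduct.tprod ℂ f) (PiTensorProduct.tprod ℂ g) = ∏ j, Sj j (f j) (g j)) :
    ∀ y ∈ LieSubalgebra.lieSpan ℂ (KM α hv) (Set.range (F α hv)),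
      (∀ x ∈ LieSubalgebra.lieSpan ℂ (KM α hv) (Set.range (F α hv)), Sg y x = 0) →
      ∀ p q : PiTensorProduct ℂ Mj, SM (act y p) q = 0 :=
  kernel_of_contravariant_form_acts_into_kernel_general B α hind hv hhv τ hτf K hKinv hKh hKhn Sg
    hSg Mj vj hhw1 φ hφ1 hφmul Sj hSje hSjf act hactLie hact SM hSM
end
end
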